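/- If an eligible node u of the cotree is a parallel node with exactly one non-hollow child v, and v is non-completion-forced, then the completion anchored at u is not an inclusion-minimal constrained cograph completion of G+x. -/

import Mathlib

universe u

def IsCograph {α : Type*} (G : SimpleGraph α) : Prop :=
  ¬ ∃ f : Fin 4 → α, Function.Injective f ∧
      ∀ i j : Fin 4, G.Adj (f i) (f j) ↔ (i.val + 1 = j.val ∨ j.val + 1 = i.val)

inductive Cotree (V : Type u) : Type u where
  | leaf : V → Cotree V
  | node : Bool → List (Cotree V) → Cotree V

namespace Cotree

variable {V : Type u}

def leaves : Cotree V → List V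
  | .leaf v => [v]
  | .node _ ts => ts.attach.flatMap (fun t => t.1.leaves)

decreasing_by simp_wf; have := List.sizeOf_lt_of_mem t.2; omega

def subtrees : Cotree V → List (Cotree V)
  | .leaf v => [.leaf v]
  | .node b ts => .node b ts :: ts.attach.flatMap (fun t => t.1.subtrees)

decreasing_by simp_wf; have := List.sizeOf_lt_of_mem t.2; omega

def children : Cotree V → List (Cotree V)
  | .leaf _ => []
  | .node _ ts => ts

def isSeries : Cotree V → Prop
  | .node true _ => True
  | _ => False

def isParallel : Cotree V → Prop
  | .node false _ => True
  | _ => False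

def adj : Cotree V → V → V → Prop
  | .leaf _, _, _ => False
  | .node b ts, x, y =>
      (∃ t ∈ ts.attach, adj t.1 x y) ∨
      (b = true ∧ ∃ t ∈ ts.attach, ∃ s ∈ ts.attach,
        t.1 ≠ s.1 ∧ x ∈ t.1.leaves ∧ y ∈ s.1.leaves)

decreasing_by simp_wf; have := List.sizeOf_lt_of_mem t.2; omega

def valid : Cotree V → Prop
  | .leaf _ => True
  | .node b ts => 2 ≤ ts.length ∧ ∀ t ∈ ts.attach, valid t.1 ∧
      ∀ b' ts', t.1 = .node b' ts' → b' ≠ b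

decreasing_by simp_wf; have := List.sizeOf_lt_of_mem t.2; omega

def hollow (N : Set V) (t : Cotree V) : Prop := ∀ v ∈ t.leaves, v ∉ N
def full (N : Set V) (t : Cotree V) : Prop := ∀ v ∈ t.leaves, v ∈ N
def uniform (N : Set V) (t : Cotree V) : Prop := full N t ∨ hollow N t
def mixed (N : Set V) (t : Cotree V) : Prop := ¬ uniform N t

def forced (N : Set V) : Cotree V → Prop
  | .leaf v => v ∈ N
  | .node b ts =>
      full N (.node b ts) ∨
      (b = false ∧ ∀ t ∈ ts, ¬ hollow N t) ∨
      (b = true ∧ ∀ t ∈ ts.attach, forced N t.1)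

decreasing_by simp_wf; have := List.sizeOf_lt_of_mem t.2; omega

def eligible (N : Set V) : Cotree V → Cotree V → Prop
  | .leaf v, u => u = .leaf v
  | .node b ts, u => u = .node b ts ∨
      ∃ t ∈ ts.attach, eligible N t.1 u ∧
        (b = false → ∀ s ∈ ts, s ≠ t.1 → hollow N s)

decreasing_by simp_wf; have := List.sizeOf_lt_of_mem t.2; omega

def IsLcaLeaves (T u : Cotree V) (x y : V) : Prop :=
  u ∈ T.subtrees ∧ x ∈ u.leaves ∧ y ∈ u.leaves ∧
    ∀ c ∈ u.children, ¬ (x ∈ c.leaves ∧ y ∈ c.leaves)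

def IsLcaNodeLeaf (T w u : Cotree V) (y : V) : Prop :=
  w ∈ T.subtrees ∧ u ∈ w.subtrees ∧ y ∈ w.leaves ∧
    ∀ c ∈ w.children, ¬ (u ∈ c.subtrees ∧ y ∈ c.leaves)

def graphOf (T : Cotree V) : SimpleGraph V :=
  SimpleGraph.fromRel (fun a b => T.adj a b)

def graphPlus (T : Cotree V) (N : Set V) : SimpleGraph (Option V) :=
  SimpleGraph.fromRel (fun a b =>
    match a, b with
    | some u, some v => T.adj u v
    | none, some v => v ∈ N
    | _, _ => False)

def IsConstrainedCompletion (T : Cotree V) (Nx N' : Set V) : Prop :=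
  Nx ⊆ N' ∧ (∀ v ∈ N', v ∈ T.leaves) ∧ IsCograph (graphPlus T N')

def IsMinimalConstrainedCompletion (T : Cotree V) (Nx N' : Set V) : Prop :=
  IsConstrainedCompletion T Nx N' ∧
    ∀ N'' ⊆ N', IsConstrainedCompletion T Nx N'' → N'' = N'

def IsInsertionNode (T : Cotree V) (N' : Set V) (u : Cotree V) : Prop :=
  u ∈ T.subtrees ∧ mixed N' u ∧ (∀ c ∈ u.children, uniform N' c) ∧
    ∀ y ∈ T.leaves, y ∉ u.leaves →
      (y ∈ N' ↔ ∃ w, IsLcaNodeLeaf T w u y ∧ w.isSeries)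

def IsCMInsertionNode (T : Cotree V) (Nx : Set V) (u : Cotree V) : Prop :=
  ∃ N', IsMinimalConstrainedCompletion T Nx N' ∧ IsInsertionNode T N' u

def anchored (T u : Cotree V) (Nx : Set V) : Set V :=
  Nx ∪ {y | y ∈ T.leaves ∧ y ∉ u.leaves ∧ ∃ w, IsLcaNodeLeaf T w u y ∧ w.isSeries}
     ∪ {y | ∃ c ∈ u.children, ¬ hollow Nx c ∧ y ∈ c.leaves}

end Cotree

/-!
Since `v` is not completion-forced, `x` can be inserted into the cotree of `v` so that it sees all
of `Nx ∩ V(v)` but misses some leaf `m` of `v`: at a leaf outside `Nx` it stays isolated, at a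
parallel node with a hollow child `c` it is joined to the union of the other children, and at a
series node it is inserted into a non-forced child and joined to all its siblings. Putting this
cotree back in place of `v`, and then joining `x` to the siblings at every series ancestor of `u`,
gives a cotree of `G + x`. Its neighbourhood of `x` contains `Nx` (eligibility makes the siblings
at parallel ancestors hollow) and lies inside the completion anchored at `u`, but misses `m`,
which that completion contains; so the anchored completion is not minimal.
-/

namespace Cotree

variable {V : Type u} {W : Type*}

@[induction_eliminator]
theorem induction {P : Cotree V → Prop} (leaf : ∀ a, P (leaf a))
    (node : ∀ b ts, (∀ t ∈ ts, P t) → P (node b ts)) : ∀ t, P t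
  | .leaf a => leaf a
  | .node b ts => node b ts fun t _ => induction leaf node t

theorem leaves_node (b : Bool) (ts : List (Cotree V)) :
    (node b ts).leaves = ts.flatMap leaves := by
  simp [leaves]

theorem mem_leaves_node {b : Bool} {ts : List (Cotree V)} {x : V} :
    x ∈ (node b ts).leaves ↔ ∃ t ∈ ts, x ∈ t.leaves := by
  simp [leaves_node]

theorem subtrees_node (b : Bool) (ts : List (Cotree V)) :
    (node b ts).subtrees = node b ts :: ts.flatMap subtrees := by
  simp [subtrees]

theorem not_adj_leaf {a x y : V} : ¬ (leaf a).adj x y := by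
  simp [adj]

theorem adj_node_iff {b : Bool} {ts : List (Cotree V)} {x y : V} :
    (node b ts).adj x y ↔ (∃ t ∈ ts, t.adj x y) ∨
      (b = true ∧ ∃ t ∈ ts, ∃ s ∈ ts, t ≠ s ∧ x ∈ t.leaves ∧ y ∈ s.leaves) := by
  rw [adj]
  simp only [List.mem_attach, true_and, Subtype.exists, exists_prop]

theorem eligible_node_iff {N : Set V} {b : Bool} {ts : List (Cotree V)} {u : Cotree V} :
    eligible N (node b ts) u ↔ u = node b ts ∨
      ∃ t ∈ ts, eligible N t u ∧ (b = false → ∀ s ∈ ts, s ≠ t → hollow N s) := by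
  rw [eligible]
  simp only [List.mem_attach, true_and, Subtype.exists, exists_prop]

theorem forced_node_iff {N : Set V} {b : Bool} {ts : List (Cotree V)} :
    forced N (node b ts) ↔ full N (node b ts) ∨ (b = false ∧ ∀ t ∈ ts, ¬ hollow N t) ∨
      (b = true ∧ ∀ t ∈ ts, forced N t) := by
  simp [forced]

theorem adj_symm {t : Cotree V} {x y : V} (h : t.adj x y) : t.adj y x := by
  induction t with
  | leaf a => exact absurd h not_adj_leaf
  | node b ts ih =>
    rw [adj_node_iff] at h ⊢
    rcases h with ⟨s, hs, h⟩ | ⟨hb, s₁, hs₁, s₂, hs₂, hne, hx, hy⟩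
    · exact Or.inl ⟨s, hs, ih s hs h⟩
    · exact Or.inr ⟨hb, s₂, hs₂, s₁, hs₁, hne.symm, hy, hx⟩

theorem adj_comm {t : Cotree V} {x y : V} : t.adj x y ↔ t.adj y x :=
  ⟨adj_symm, adj_symm⟩

theorem mem_leaves_of_adj {t : Cotree V} {x y : V} (h : t.adj x y) : x ∈ t.leaves := by
  induction t with
  | leaf a => exact absurd h not_adj_leaf
  | node b ts ih =>
    rw [mem_leaves_node]
    rcases adj_node_iff.mp h with ⟨s, hs, h⟩ | ⟨-, s, hs, -, -, -, hx, -⟩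
    · exact ⟨s, hs, ih s hs h⟩
    · exact ⟨s, hs, hx⟩

theorem valid_of_mem_children {b : Bool} {ts : List (Cotree V)} (h : (node b ts).valid)
    {t : Cotree V} (ht : t ∈ ts) : t.valid := by
  rw [valid] at h
  exact (h.2 ⟨t, ht⟩ (List.mem_attach _ _)).1

theorem leaves_ne_nil {t : Cotree V} (h : t.valid) : t.leaves ≠ [] := by
  induction t with
  | leaf a => simp [leaves]
  | node b ts ih =>
    have hlen : 2 ≤ ts.length := by rw [valid] at h; exact h.1
    obtain ⟨s, hs⟩ := List.exists_mem_of_length_pos (l := ts) (by omega)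
    obtain ⟨x, hx⟩ := List.exists_mem_of_ne_nil _ (ih s hs (valid_of_mem_children h hs))
    exact List.ne_nil_of_mem (mem_leaves_node.mpr ⟨s, hs, hx⟩)

theorem nodup_of_mem_children {b : Bool} {ts : List (Cotree V)} (h : (node b ts).leaves.Nodup)
    {t : Cotree V} (ht : t ∈ ts) : t.leaves.Nodup := by
  rw [leaves_node, List.nodup_flatMap] at h
  exact h.1 t ht

theorem leaves_perm_middle (p q : List (Cotree V)) (t : Cotree V) :
    ((p ++ t :: q).flatMap leaves).Perm (t.leaves ++ (p ++ q).flatMap leaves) :=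
  List.perm_middle.flatMap_right leaves

theorem not_mem_leaves_of_mem_siblings {b : Bool} {p q : List (Cotree V)} {t s : Cotree V}
    (h : (node b (p ++ t :: q)).leaves.Nodup) (hs : s ∈ p ++ q) {x : V} (hx : x ∈ t.leaves) :
    x ∉ s.leaves := by
  rw [leaves_node, (leaves_perm_middle p q t).nodup_iff, List.nodup_append] at h
  exact fun hxs => h.2.2 x hx x (List.mem_flatMap.mpr ⟨s, hs, hxs⟩) rfl

theorem eq_of_mem_leaves_of_nodup {b : Bool} {ts : List (Cotree V)}
    (h : (node b ts).leaves.Nodup) {s t : Cotree V} (hs : s ∈ ts) (ht : t ∈ ts) {x : V}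
    (hxs : x ∈ s.leaves) (hxt : x ∈ t.leaves) : s = t := by
  obtain ⟨p, q, rfl⟩ := List.append_of_mem ht
  by_contra hne
  exact not_mem_leaves_of_mem_siblings h (by simpa [hne] using hs) hxt hxs

theorem mem_subtrees_self (t : Cotree V) : t ∈ t.subtrees := by
  cases t <;> simp [subtrees]

theorem mem_subtrees_node {b : Bool} {ts : List (Cotree V)} {t s : Cotree V} (ht : t ∈ ts)
    (hs : s ∈ t.subtrees) : s ∈ (node b ts).subtrees := by
  rw [subtrees_node]
  exact List.mem_cons_of_mem _ (List.mem_flatMap.mpr ⟨t, ht, hs⟩)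

theorem of_mem_subtrees {P : Cotree V → Prop} (hP : ∀ b ts, P (node b ts) → ∀ t ∈ ts, P t)
    {t s : Cotree V} (ht : P t) (hs : s ∈ t.subtrees) : P s := by
  induction t with
  | leaf a =>
    simp only [subtrees, List.mem_singleton] at hs
    exact hs ▸ ht
  | node b ts ih =>
    rw [subtrees_node, List.mem_cons] at hs
    rcases hs with rfl | hs
    · exact ht
    · obtain ⟨c, hc, hs⟩ := List.mem_flatMap.mp hs
      exact ih c hc (hP b ts ht c hc) hs

theorem valid_of_mem_subtrees {t s : Cotree V} (ht : t.valid) (hs : s ∈ t.subtrees) : s.valid :=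
  of_mem_subtrees (fun _ _ => valid_of_mem_children) ht hs

theorem nodup_of_mem_subtrees {t s : Cotree V} (ht : t.leaves.Nodup) (hs : s ∈ t.subtrees) :
    s.leaves.Nodup :=
  of_mem_subtrees (P := fun s => s.leaves.Nodup) (fun _ _ => nodup_of_mem_children) ht hs

theorem leaves_subset_of_mem_subtrees {t s : Cotree V} (hs : s ∈ t.subtrees) :
    s.leaves ⊆ t.leaves :=
  of_mem_subtrees (P := fun s => s.leaves ⊆ t.leaves)
    (fun _ _ h c hc _ hx => h (mem_leaves_node.mpr ⟨c, hc, hx⟩)) (List.Subset.refl _) hs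

theorem mem_subtrees_of_eligible {N : Set V} {t u : Cotree V} (h : eligible N t u) :
    u ∈ t.subtrees := by
  induction t with
  | leaf a =>
    rw [eligible] at h
    exact h ▸ mem_subtrees_self _
  | node b ts ih =>
    rcases eligible_node_iff.mp h with rfl | ⟨c, hc, hcu, -⟩
    · exact mem_subtrees_self _
    · exact mem_subtrees_node hc (ih c hc hcu)

theorem graphOf_adj {t : Cotree V} {x y : V} : (graphOf t).Adj x y ↔ x ≠ y ∧ t.adj x y := by
  rw [graphOf, SimpleGraph.fromRel_adj, adj_comm (x := y), or_self]

theorem adj_node_iff_of_mem_leaves {b : Bool} {ts : List (Cotree V)}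
    (h : (node b ts).leaves.Nodup) {t : Cotree V} (ht : t ∈ ts) {x y : V}
    (hx : x ∈ t.leaves) (hy : y ∈ t.leaves) : (node b ts).adj x y ↔ t.adj x y := by
  refine ⟨fun hxy => ?_, fun hxy => adj_node_iff.mpr (Or.inl ⟨t, ht, hxy⟩)⟩
  rcases adj_node_iff.mp hxy with ⟨s, hs, hxy⟩ | ⟨-, s₁, hs₁, s₂, hs₂, hne, hx₁, hy₂⟩
  · rwa [← eq_of_mem_leaves_of_nodup h hs ht (mem_leaves_of_adj hxy) hx]
  · exact absurd ((eq_of_mem_leaves_of_nodup h hs₁ ht hx₁ hx).trans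
      (eq_of_mem_leaves_of_nodup h hs₂ ht hy₂ hy).symm) hne

/-- In a parallel node the edges of an induced path cannot leave a child, in a series node its
non-edges cannot; either way the path lies inside one child. -/
theorem exists_child_of_induced_path {b : Bool} {ts : List (Cotree V)}
    (hnd : (node b ts).leaves.Nodup) {f : Fin 4 → V} (hf_inj : Function.Injective f)
    (hf : ∀ i j : Fin 4,
      (graphOf (node b ts)).Adj (f i) (f j) ↔ (i.val + 1 = j.val ∨ j.val + 1 = i.val)) :
    ∃ t ∈ ts, ∀ i, f i ∈ t.leaves := by
  have hadj : ∀ i j : Fin 4, i.val + 1 = j.val → (node b ts).adj (f i) (f j) :=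
    fun i j h => (graphOf_adj.mp ((hf i j).mpr (Or.inl h))).2
  have hmem : ∀ i, ∃ t ∈ ts, f i ∈ t.leaves := by
    intro i
    rw [← mem_leaves_node (b := b)]
    fin_cases i
    exacts [mem_leaves_of_adj (hadj 0 1 rfl), mem_leaves_of_adj (hadj 1 2 rfl),
      mem_leaves_of_adj (hadj 2 3 rfl), mem_leaves_of_adj (adj_symm (hadj 2 3 rfl))]
  choose c hc hfc using hmem
  suffices hc0 : ∀ i, c i = c 0 from ⟨c 0, hc 0, fun i => hc0 i ▸ hfc i⟩
  cases b with
  | false =>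
    have key : ∀ i j : Fin 4, i.val + 1 = j.val → c i = c j := by
      intro i j hij
      obtain ⟨s, hs, hst⟩ | ⟨hb, -⟩ := adj_node_iff.mp (hadj i j hij)
      · exact (eq_of_mem_leaves_of_nodup hnd (hc i) hs (hfc i) (mem_leaves_of_adj hst)).trans
          (eq_of_mem_leaves_of_nodup hnd hs (hc j) (mem_leaves_of_adj (adj_symm hst)) (hfc j))
      · exact absurd hb Bool.false_ne_true
    have h01 := key 0 1 rfl
    have h12 := key 1 2 rfl
    have h23 := key 2 3 rfl
    intro i
    fin_cases i
    exacts [rfl, h01.symm, (h01.trans h12).symm, (h01.trans (h12.trans h23)).symm]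
  | true =>
    have key : ∀ i j : Fin 4, ¬ (i.val + 1 = j.val ∨ j.val + 1 = i.val) → i ≠ j → c i = c j := by
      intro i j hij hne
      by_contra hcne
      exact hij ((hf i j).mp (graphOf_adj.mpr ⟨hf_inj.ne hne,
        adj_node_iff.mpr (Or.inr ⟨rfl, c i, hc i, c j, hc j, hcne, hfc i, hfc j⟩)⟩))
    have h02 := key 0 2 (by decide) (by decide)
    have h03 := key 0 3 (by decide) (by decide)
    have h13 := key 1 3 (by decide) (by decide)
    intro i
    fin_cases i
    exacts [rfl, h13.trans h03.symm, h02.symm, h03.symm]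

theorem isCograph_graphOf {t : Cotree V} (hnd : t.leaves.Nodup) : IsCograph (graphOf t) := by
  induction t with
  | leaf a =>
    rintro ⟨f, -, hf⟩
    exact not_adj_leaf (graphOf_adj.mp ((hf 0 1).mpr (Or.inl rfl))).2
  | node b ts ih =>
    rintro ⟨f, hf_inj, hf⟩
    obtain ⟨t, ht, hft⟩ := exists_child_of_induced_path hnd hf_inj hf
    refine ih t ht (nodup_of_mem_children hnd ht) ⟨f, hf_inj, fun i j => ?_⟩
    rw [← hf i j, graphOf_adj, graphOf_adj, adj_node_iff_of_mem_leaves hnd ht (hft i) (hft j)]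

def map (f : V → W) : Cotree V → Cotree W
  | .leaf a => .leaf (f a)
  | .node b ts => .node b (ts.map (map f))

theorem leaves_map (f : V → W) (t : Cotree V) : (t.map f).leaves = t.leaves.map f := by
  induction t with
  | leaf a => simp [map, leaves]
  | node b ts ih =>
    rw [map, leaves_node, leaves_node, List.flatMap_map, List.map_flatMap]
    exact List.flatMap_congr ih

theorem map_injective {f : V → W} (hf : f.Injective) : (map f).Injective := by
  intro s t h
  induction s generalizing t with
  | leaf a => cases t <;> simp_all [map, hf.eq_iff]
  | node b ts ih =>
    cases t with
    | leaf a => simp [map] at h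
    | node b' ts' =>
      simp only [map, node.injEq] at h
      obtain ⟨rfl, h⟩ := h
      have hlen : ts.length = ts'.length := by simpa using congrArg List.length h
      refine congrArg _ (List.ext_getElem hlen fun i hi hi' => ih _ (List.getElem_mem hi) ?_)
      simpa [hi, hi'] using congrArg (·[i]?) h

theorem adj_node_map_iff {f : V → W} {φ : Cotree V → Cotree W} {b : Bool} {ts : List (Cotree V)}
    (hφ : Set.InjOn φ {s | s ∈ ts})
    (hleaves : ∀ s ∈ ts, ∀ y, f y ∈ (φ s).leaves ↔ y ∈ s.leaves)
    (hadj : ∀ s ∈ ts, ∀ x y, (φ s).adj (f x) (f y) ↔ s.adj x y) {x y : V} :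
    (node b (ts.map φ)).adj (f x) (f y) ↔ (node b ts).adj x y := by
  simp only [adj_node_iff, List.mem_map]
  constructor
  · rintro (⟨_, ⟨s, hs, rfl⟩, h⟩ | ⟨hb, _, ⟨s₁, hs₁, rfl⟩, _, ⟨s₂, hs₂, rfl⟩, hne, hx, hy⟩)
    · exact Or.inl ⟨s, hs, (hadj s hs x y).mp h⟩
    · exact Or.inr ⟨hb, s₁, hs₁, s₂, hs₂, fun h => hne (h ▸ rfl),
        (hleaves s₁ hs₁ x).mp hx, (hleaves s₂ hs₂ y).mp hy⟩
  · rintro (⟨s, hs, h⟩ | ⟨hb, s₁, hs₁, s₂, hs₂, hne, hx, hy⟩)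
    · exact Or.inl ⟨φ s, ⟨s, hs, rfl⟩, (hadj s hs x y).mpr h⟩
    · exact Or.inr ⟨hb, φ s₁, ⟨s₁, hs₁, rfl⟩, φ s₂, ⟨s₂, hs₂, rfl⟩, fun h => hne (hφ hs₁ hs₂ h),
        (hleaves s₁ hs₁ x).mpr hx, (hleaves s₂ hs₂ y).mpr hy⟩

theorem adj_map {f : V → W} (hf : f.Injective) {t : Cotree V} {x y : V} :
    (t.map f).adj (f x) (f y) ↔ t.adj x y := by
  induction t generalizing x y with
  | leaf a => simp [map, not_adj_leaf]
  | node b ts ih =>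
    rw [map]
    exact adj_node_map_iff (map_injective hf).injOn
      (fun s _ y => by rw [leaves_map, List.mem_map_of_injective hf]) (fun s hs _ _ => ih s hs)

theorem some_mem_leaves_map_some {t : Cotree V} {y : V} :
    some y ∈ (t.map some).leaves ↔ y ∈ t.leaves := by
  rw [leaves_map, List.mem_map_of_injective (Option.some_injective V)]

theorem none_not_mem_leaves_map_some {t : Cotree V} : none ∉ (t.map some).leaves := by
  simp [leaves_map]

theorem not_adj_map_some_none {t : Cotree V} {z : Option V} : ¬ (t.map some).adj none z :=
  fun h => none_not_mem_leaves_map_some (mem_leaves_of_adj h)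

theorem adj_node_congr_perm {b : Bool} {ts ts' : List (Cotree V)} (hp : ts.Perm ts') {x y : V} :
    (node b ts).adj x y ↔ (node b ts').adj x y := by
  simp only [adj_node_iff, hp.mem_iff]

theorem not_mem_siblings {b : Bool} {p q : List (Cotree V)} {t : Cotree V}
    (h : (node b (p ++ t :: q)).leaves.Nodup) (ht : t.leaves ≠ []) : t ∉ p ++ q := by
  obtain ⟨x, hx⟩ := List.exists_mem_of_ne_nil _ ht
  exact fun hmem => not_mem_leaves_of_mem_siblings h hmem hx hx

/-- `t'` is a cotree of `G + x`, where `G` is the cograph of `t`, the new vertex `x` is `none`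
and its neighbourhood is `N`. -/
structure IsCotreeOfPlus (t : Cotree V) (N : Set V) (t' : Cotree (Option V)) : Prop where
  leaves_perm : t'.leaves.Perm (none :: t.leaves.map some)
  adj_some_some : ∀ x y, t'.adj (some x) (some y) ↔ t.adj x y
  adj_none_some : ∀ y, t'.adj none (some y) ↔ y ∈ N

theorem isCotreeOfPlus_pair (b : Bool) (t : Cotree V) :
    IsCotreeOfPlus t {y | b = true ∧ y ∈ t.leaves} (node b [t.map some, leaf none]) where
  leaves_perm := by
    simp [leaves_node, leaves_map, leaves]
  adj_some_some x y := by
    simp [adj_node_iff, adj_map (Option.some_injective V), not_adj_leaf, leaves]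
  adj_none_some y := by
    have hne : leaf none ≠ t.map some := fun h =>
      none_not_mem_leaves_map_some (by rw [← h]; simp [leaves])
    simp [adj_node_iff, not_adj_map_some_none, not_adj_leaf, leaves, some_mem_leaves_map_some,
      none_not_mem_leaves_map_some, hne]

namespace IsCotreeOfPlus

variable {t : Cotree V} {N : Set V} {t' : Cotree (Option V)}

theorem none_mem_leaves (h : IsCotreeOfPlus t N t') : none ∈ t'.leaves :=
  h.leaves_perm.mem_iff.mpr List.mem_cons_self

theorem some_mem_leaves_iff (h : IsCotreeOfPlus t N t') {y : V} :
    some y ∈ t'.leaves ↔ y ∈ t.leaves := by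
  simp [h.leaves_perm.mem_iff]

theorem mem_leaves_of_mem (h : IsCotreeOfPlus t N t') {y : V} (hy : y ∈ N) : y ∈ t.leaves :=
  h.some_mem_leaves_iff.mp (mem_leaves_of_adj (adj_symm ((h.adj_none_some y).mpr hy)))

theorem ne_map_some (h : IsCotreeOfPlus t N t') (s : Cotree V) : t' ≠ s.map some :=
  fun he => none_not_mem_leaves_map_some (he ▸ h.none_mem_leaves)

theorem graphPlus_eq (h : IsCotreeOfPlus t N t') : graphPlus t N = graphOf t' := by
  ext (_ | x) (_ | y) <;>
    simp [graphPlus, graphOf, h.adj_some_some, h.adj_none_some, adj_comm (t := t') (y := none)]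

theorem isCograph (h : IsCotreeOfPlus t N t') (hnd : t.leaves.Nodup) :
    IsCograph (graphPlus t N) := by
  rw [h.graphPlus_eq]
  refine isCograph_graphOf (h.leaves_perm.nodup_iff.mpr ?_)
  exact List.nodup_cons.mpr ⟨by simp, hnd.map (Option.some_injective V)⟩

theorem congr (h : IsCotreeOfPlus t N t') {s : Cotree V} (hl : s.leaves.Perm t.leaves)
    (ha : ∀ x y, s.adj x y ↔ t.adj x y) : IsCotreeOfPlus s N t' where
  leaves_perm := h.leaves_perm.trans ((hl.map some).symm.cons none)
  adj_some_some x y := (h.adj_some_some x y).trans (ha x y).symm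
  adj_none_some := h.adj_none_some

theorem cons (h : IsCotreeOfPlus t N t') (b : Bool) {ts : List (Cotree V)} (ht : t ∉ ts) :
    IsCotreeOfPlus (node b (t :: ts)) (N ∪ {y | b = true ∧ ∃ s ∈ ts, y ∈ s.leaves})
      (node b (t' :: ts.map (map some))) where
  leaves_perm := by
    simp only [leaves_node, List.flatMap_cons, List.flatMap_map, leaves_map, List.map_append,
      List.map_flatMap]
    exact h.leaves_perm.append_right _
  adj_some_some x y := by
    classical
    let φ : Cotree V → Cotree (Option V) := fun s => if s = t then t' else s.map some
    have hφ : t' :: ts.map (map some) = (t :: ts).map φ := by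
      simp only [List.map_cons, φ, List.cons.injEq, if_true, true_and]
      exact (List.map_congr_left fun s hs => (if_neg fun (hst : s = t) => ht (hst ▸ hs)).symm)
    rw [hφ]
    refine adj_node_map_iff (fun s₁ _ s₂ _ he => ?_) (fun s _ y => ?_) (fun s _ x y => ?_)
    · by_cases h₁ : s₁ = t <;> by_cases h₂ : s₂ = t <;> simp only [φ, h₁, h₂, if_true, if_false] at he
      · exact h₁.trans h₂.symm
      · exact absurd he (h.ne_map_some s₂)
      · exact absurd he.symm (h.ne_map_some s₁)
      · exact map_injective (Option.some_injective V) he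
    · by_cases hs : s = t
      · simp only [φ, hs, if_true, h.some_mem_leaves_iff]
      · simp only [φ, hs, if_false, some_mem_leaves_map_some]
    · by_cases hs : s = t
      · simp only [φ, hs, if_true, h.adj_some_some]
      · simp only [φ, hs, if_false, adj_map (Option.some_injective V)]
  adj_none_some y := by
    simp only [adj_node_iff, List.mem_cons, List.mem_map, Set.mem_union, Set.mem_ofPred_eq]
    constructor
    · rintro (⟨z, rfl | ⟨s, -, rfl⟩, hz⟩ | ⟨hb, z₁, hz₁, z₂, hz₂, hne, h₁, h₂⟩)
      · exact Or.inl ((h.adj_none_some y).mp hz)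
      · exact absurd hz not_adj_map_some_none
      · obtain rfl | ⟨s, -, rfl⟩ := hz₁
        · obtain rfl | ⟨s, hs, rfl⟩ := hz₂
          · exact absurd rfl hne
          · exact Or.inr ⟨hb, s, hs, some_mem_leaves_map_some.mp h₂⟩
        · exact absurd h₁ none_not_mem_leaves_map_some
    · rintro (hy | ⟨hb, s, hs, hy⟩)
      · exact Or.inl ⟨t', Or.inl rfl, (h.adj_none_some y).mpr hy⟩
      · exact Or.inr ⟨hb, t', Or.inl rfl, s.map some, Or.inr ⟨s, hs, rfl⟩, h.ne_map_some s,
          h.none_mem_leaves, some_mem_leaves_map_some.mpr hy⟩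

theorem middle (h : IsCotreeOfPlus t N t') (b : Bool) {p q : List (Cotree V)} (ht : t ∉ p ++ q) :
    IsCotreeOfPlus (node b (p ++ t :: q)) (N ∪ {y | b = true ∧ ∃ s ∈ p ++ q, y ∈ s.leaves})
      (node b (t' :: (p ++ q).map (map some))) := by
  refine (h.cons b ht).congr ?_ fun x y => adj_node_congr_perm List.perm_middle
  simpa only [leaves_node] using List.perm_middle.flatMap_right leaves

end IsCotreeOfPlus

theorem mem_middle_iff {p q : List (Cotree V)} {s t : Cotree V} :
    s ∈ p ++ t :: q ↔ s = t ∨ s ∈ p ++ q := by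
  rw [List.perm_middle.mem_iff, List.mem_cons]

theorem adj_node_false_iff {ts : List (Cotree V)} {x y : V} :
    (node false ts).adj x y ↔ ∃ t ∈ ts, t.adj x y := by
  simp [adj_node_iff]

theorem exists_isCotreeOfPlus_join_siblings {p q : List (Cotree V)} {c : Cotree V}
    (hc : node false (p ++ q) ≠ c) :
    ∃ t', IsCotreeOfPlus (node false (p ++ c :: q)) {y | ∃ s ∈ p ++ q, y ∈ s.leaves} t' := by
  have hperm : (node false (p ++ c :: q)).leaves.Perm
      (node false [node false (p ++ q), c]).leaves := by
    simpa [leaves_node] using (leaves_perm_middle p q c).trans List.perm_append_comm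
  have hadj : ∀ x y, (node false (p ++ c :: q)).adj x y ↔
      (node false [node false (p ++ q), c]).adj x y := fun x y => by
    rw [adj_node_congr_perm List.perm_middle]
    simp [adj_node_false_iff, or_comm]
  have h := ((isCotreeOfPlus_pair true (node false (p ++ q))).cons false (ts := [c])
    (by simpa using hc)).congr hperm hadj
  exact ⟨_, by convert h using 1; ext y; simp [mem_leaves_node]⟩

theorem exists_isCotreeOfPlus_of_not_forced {Nx : Set V} {t : Cotree V} (hv : t.valid)
    (hnd : t.leaves.Nodup) (hf : ¬ forced Nx t) :
    ∃ N t', IsCotreeOfPlus t N t' ∧ (∀ y ∈ Nx, y ∈ t.leaves → y ∈ N) ∧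
      ∃ m ∈ t.leaves, m ∉ N := by
  induction t with
  | leaf a =>
    refine ⟨_, _, isCotreeOfPlus_pair false (leaf a), fun y hy hya => ?_, a, by simp [leaves],
      fun h => Bool.false_ne_true h.1⟩
    simp only [leaves, List.mem_singleton] at hya
    exact absurd (hya ▸ hy) (by simpa [forced] using hf)
  | node b ts ih =>
    rw [forced_node_iff] at hf
    push Not at hf
    cases b with
    | false =>
      obtain ⟨c, hc, hhol⟩ := hf.2.1 rfl
      obtain ⟨m, hm⟩ := List.exists_mem_of_ne_nil _ (leaves_ne_nil (valid_of_mem_children hv hc))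
      obtain ⟨p, q, rfl⟩ := List.append_of_mem hc
      have hm_pq : ∀ s ∈ p ++ q, m ∉ s.leaves := fun s hs =>
        not_mem_leaves_of_mem_siblings hnd hs hm
      obtain ⟨t', ht'⟩ := exists_isCotreeOfPlus_join_siblings (p := p) (q := q) (c := c)
        fun he => have ⟨s, hs, hms⟩ := mem_leaves_node.mp (he ▸ hm); hm_pq s hs hms
      refine ⟨_, t', ht', fun y hy hyt => ?_, m, mem_leaves_node.mpr ⟨c, hc, hm⟩,
        fun ⟨s, hs, hms⟩ => hm_pq s hs hms⟩
      obtain ⟨s, hs, hys⟩ := mem_leaves_node.mp hyt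
      rcases mem_middle_iff.mp hs with rfl | hs
      · exact absurd hy (hhol y hys)
      · exact ⟨s, hs, hys⟩
    | true =>
      obtain ⟨c, hc, hcf⟩ := hf.2.2 rfl
      obtain ⟨N, c', hc', hNx, m, hm, hmN⟩ :=
        ih c hc (valid_of_mem_children hv hc) (nodup_of_mem_children hnd hc) hcf
      obtain ⟨p, q, rfl⟩ := List.append_of_mem hc
      refine ⟨_, _, hc'.middle true (not_mem_siblings hnd (List.ne_nil_of_mem hm)),
        fun y hy hyt => ?_, m, mem_leaves_node.mpr ⟨c, hc, hm⟩, ?_⟩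
      · obtain ⟨s, hs, hys⟩ := mem_leaves_node.mp hyt
        rcases mem_middle_iff.mp hs with rfl | hs
        · exact Or.inl (hNx y hy hys)
        · exact Or.inr ⟨rfl, s, hs, hys⟩
      · rintro (h | ⟨-, s, hs, hms⟩)
        · exact hmN h
        · exact not_mem_leaves_of_mem_siblings hnd hs hm hms

def seriesLcaLeaves (T u : Cotree V) : Set V :=
  {y | y ∈ T.leaves ∧ y ∉ u.leaves ∧ ∃ w, IsLcaNodeLeaf T w u y ∧ w.isSeries}

theorem seriesLcaLeaves_subset {b : Bool} {ts : List (Cotree V)} {t : Cotree V} (ht : t ∈ ts)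
    (u : Cotree V) : seriesLcaLeaves t u ⊆ seriesLcaLeaves (node b ts) u :=
  fun _ ⟨hy, hyu, w, ⟨hw, hwu, hyw, hc⟩, hws⟩ =>
    ⟨mem_leaves_node.mpr ⟨t, ht, hy⟩, hyu, w, ⟨mem_subtrees_node ht hw, hwu, hyw, hc⟩, hws⟩

theorem mem_seriesLcaLeaves_of_mem_siblings {p q : List (Cotree V)} {t u s : Cotree V} {y : V}
    (hnd : (node true (p ++ t :: q)).leaves.Nodup) (hu : u ∈ t.subtrees) (hu' : u.leaves ≠ [])
    (hs : s ∈ p ++ q) (hy : y ∈ s.leaves) : y ∈ seriesLcaLeaves (node true (p ++ t :: q)) u := by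
  have ht : t ∈ p ++ t :: q := mem_middle_iff.mpr (Or.inl rfl)
  have hyT : y ∈ (node true (p ++ t :: q)).leaves :=
    mem_leaves_node.mpr ⟨s, mem_middle_iff.mpr (Or.inr hs), hy⟩
  have hyt : y ∉ t.leaves := fun h => not_mem_leaves_of_mem_siblings hnd hs h hy
  obtain ⟨l, hl⟩ := List.exists_mem_of_ne_nil _ hu'
  refine ⟨hyT, fun h => hyt (leaves_subset_of_mem_subtrees hu h), _,
    ⟨mem_subtrees_self _, mem_subtrees_node ht hu, hyT, fun c hc ⟨hcu, hyc⟩ => ?_⟩, trivial⟩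
  obtain rfl := eq_of_mem_leaves_of_nodup hnd hc ht (leaves_subset_of_mem_subtrees hcu hl)
    (leaves_subset_of_mem_subtrees hu hl)
  exact hyt hyc

theorem exists_isCotreeOfPlus_of_eligible {Nx N : Set V} {T u : Cotree V}
    {u' : Cotree (Option V)} (he : eligible Nx T u) (hnd : T.leaves.Nodup) (hu : u.leaves ≠ [])
    (h : IsCotreeOfPlus u N u') :
    ∃ N' T', IsCotreeOfPlus T N' T' ∧ N ⊆ N' ∧ N' ⊆ N ∪ seriesLcaLeaves T u ∧
      ∀ y ∈ Nx, y ∈ T.leaves → y ∉ u.leaves → y ∈ N' := by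
  induction T with
  | leaf a =>
    rw [eligible] at he
    subst he
    exact ⟨N, u', h, subset_rfl, Set.subset_union_left, fun y _ h₁ h₂ => absurd h₁ h₂⟩
  | node b ts ih =>
    rcases eligible_node_iff.mp he with rfl | ⟨t, ht, hte, hsib⟩
    · exact ⟨N, u', h, subset_rfl, Set.subset_union_left, fun y _ h₁ h₂ => absurd h₁ h₂⟩
    obtain ⟨N₀, T₀, h₀, hN₀, hN₀_sub, hNx₀⟩ := ih t ht hte (nodup_of_mem_children hnd ht)
    have hut := mem_subtrees_of_eligible hte
    obtain ⟨p, q, rfl⟩ := List.append_of_mem ht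
    have ht_pq : t ∉ p ++ q := not_mem_siblings hnd fun h =>
      hu (List.eq_nil_of_subset_nil (h ▸ leaves_subset_of_mem_subtrees hut))
    refine ⟨_, _, h₀.middle b ht_pq, hN₀.trans Set.subset_union_left, ?_, ?_⟩
    · rintro y (hy | ⟨rfl, s, hs, hys⟩)
      · exact (hN₀_sub hy).imp_right fun hy => seriesLcaLeaves_subset ht u hy
      · exact Or.inr (mem_seriesLcaLeaves_of_mem_siblings hnd hut hu hs hys)
    · intro y hy hyT hyu
      obtain ⟨s, hs, hys⟩ := mem_leaves_node.mp hyT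
      rcases mem_middle_iff.mp hs with rfl | hs'
      · exact Or.inl (hNx₀ y hy hys hyu)
      · cases b
        · exact absurd hy (hsib rfl s hs (fun hst => ht_pq (hst ▸ hs')) y hys)
        · exact Or.inr ⟨rfl, s, hs', hys⟩

theorem exists_isCotreeOfPlus_of_unique_nonhollow_child {Nx : Set V} {cs : List (Cotree V)}
    {v : Cotree V} (hv : v ∈ cs) (hv_valid : v.valid) (hnd : (node false cs).leaves.Nodup)
    (honly : ∀ c ∈ cs, c ≠ v → hollow Nx c) (hvnf : ¬ forced Nx v) :
    ∃ N u', IsCotreeOfPlus (node false cs) N u' ∧ N ⊆ {y | y ∈ v.leaves} ∧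
      (∀ y ∈ Nx, y ∈ (node false cs).leaves → y ∈ N) ∧ ∃ m ∈ v.leaves, m ∉ N := by
  obtain ⟨N, v', hv', hNx, m, hm, hmN⟩ :=
    exists_isCotreeOfPlus_of_not_forced hv_valid (nodup_of_mem_children hnd hv) hvnf
  obtain ⟨p, q, rfl⟩ := List.append_of_mem hv
  refine ⟨_, _, hv'.middle false (not_mem_siblings hnd (List.ne_nil_of_mem hm)), ?_,
    fun y hy hyu => ?_, m, hm, ?_⟩
  · rintro y (hy | ⟨h, -⟩)
    · exact hv'.mem_leaves_of_mem hy
    · exact absurd h Bool.false_ne_true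
  · obtain ⟨s, hs, hys⟩ := mem_leaves_node.mp hyu
    by_cases hsv : s = v
    · exact Or.inl (hNx y hy (hsv ▸ hys))
    · exact absurd hy (honly s hs hsv y hys)
  · rintro (h | ⟨h, -⟩)
    · exact hmN h
    · exact Bool.false_ne_true h

end Cotree

theorem stmt_14_general {V : Type u} (T : Cotree V) (Nx : Set V)
    (hval : T.valid) (hnd : T.leaves.Nodup)
    (hNx : ∀ v ∈ Nx, v ∈ T.leaves)
    (u : Cotree V) (hu : u ∈ T.subtrees) (helig : Cotree.eligible Nx T u)
    (hpar : u.isParallel)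
    (v : Cotree V) (hv : v ∈ u.children) (hvnh : ¬ Cotree.hollow Nx v)
    (honly : ∀ c ∈ u.children, c ≠ v → Cotree.hollow Nx c)
    (hvnf : ¬ Cotree.forced Nx v) :
    ¬ Cotree.IsMinimalConstrainedCompletion T Nx (Cotree.anchored T u Nx) := by
  open Cotree in
  rintro ⟨-, hmin⟩
  obtain ⟨cs, rfl⟩ : ∃ cs, u = node false cs := by
    rcases u with _ | ⟨_ | _, cs⟩ <;> simp_all [isParallel]
  obtain ⟨N, u', hu', hNv, hNxN, m, hmv, hmN⟩ := exists_isCotreeOfPlus_of_unique_nonhollow_child hv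
    (valid_of_mem_children (valid_of_mem_subtrees hval hu) hv) (nodup_of_mem_subtrees hnd hu)
    honly hvnf
  have hmu : m ∈ (node false cs).leaves := mem_leaves_node.mpr ⟨v, hv, hmv⟩
  obtain ⟨N', T', hT', hNN', hN'_sub, hNxN'⟩ :=
    exists_isCotreeOfPlus_of_eligible helig hnd (List.ne_nil_of_mem hmu) hu'
  have hN'_anchored : N' ⊆ anchored T (node false cs) Nx := fun y hy =>
    (hN'_sub hy).elim (fun hy => Or.inr ⟨v, hv, hvnh, hNv hy⟩) (fun hy => Or.inl (Or.inr hy))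
  have hNx_N' : Nx ⊆ N' := fun y hy => by
    by_cases hyu : y ∈ (node false cs).leaves
    · exact hNN' (hNxN y hy hyu)
    · exact hNxN' y hy (hNx y hy) hyu
  have hmN' : m ∈ N' := (hmin N' hN'_anchored ⟨hNx_N', fun _ => hT'.mem_leaves_of_mem,
    hT'.isCograph hnd⟩).symm ▸ Or.inr ⟨v, hv, hvnh, hmv⟩
  exact (hN'_sub hmN').elim hmN fun h => h.2.1 hmu

theorem stmt_14 {V : Type u} (T : Cotree V) (Nx : Set V)
    (hval : T.valid) (hnd : T.leaves.Nodup)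
    (hNx : ∀ v ∈ Nx, v ∈ T.leaves) (hmix : Cotree.mixed Nx T)
    (u : Cotree V) (hu : u ∈ T.subtrees) (helig : Cotree.eligible Nx T u)
    (hpar : u.isParallel)
    (v : Cotree V) (hv : v ∈ u.children) (hvnh : ¬ Cotree.hollow Nx v)
    (honly : ∀ c ∈ u.children, c ≠ v → Cotree.hollow Nx c)
    (hvnf : ¬ Cotree.forced Nx v) :
    ¬ Cotree.IsMinimalConstrainedCompletion T Nx (Cotree.anchored T u Nx) :=
  stmt_14_general T Nx hval hnd hNx u hu helig hpar v hv hvnh honly hvnf
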